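/- arXiv:2102.11431 — 4 statements merged into one kernel-verified Lean document; each statement's English description precedes it below -/
import Mathlib

section
/- Let f, g : (0,∞) → [0,∞] be nonincreasing measurable functions. Then for every t > 0 one has ∫₀ᵗ (∫ₛ^∞ f(r) g(r) dr) ds ≤ (∫₀ᵗ f(s) ds)·(∫₀ᵗ g(s) ds) + t·∫ₜ^∞ f(s) g(s) ds (with values in [0,∞]). -/
open MeasureTheory Set Function
open scoped ENNReal

noncomputable section

/-- The nonincreasing rearrangement of `f` with respect to the measure `μ`:
`f*(t) = inf {λ > 0 : μ{x : f x > λ} ≤ t}`. -/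
def rearr {α : Type*} [MeasurableSpace α] (μ : Measure α) (f : α → ℝ≥0∞) (t : ℝ) : ℝ≥0∞ :=
  sInf {l : ℝ≥0∞ | 0 < l ∧ μ {x | l < f x} ≤ ENNReal.ofReal t}

/-- Lebesgue measure restricted to `(0,∞)`. -/
def mP : Measure ℝ := volume.restrict (Ioi 0)

/-- The nonincreasing rearrangement of a function on `(0,∞)`. -/
def rearrP (f : ℝ → ℝ≥0∞) : ℝ → ℝ≥0∞ := rearr mP f

/-- Application of a real function (e.g. an N-function) to an extended nonnegative
real number, sending `∞` to `∞`. -/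
def appE (Φ : ℝ → ℝ) (x : ℝ≥0∞) : ℝ≥0∞ :=
  if x = ∞ then ∞ else ENNReal.ofReal (Φ x.toReal)

/-- Generalized inverse of an increasing function on `[0,∞)`. -/
def nInv (Φ : ℝ → ℝ) (v : ℝ) : ℝ :=
  sInf {x : ℝ | 0 ≤ x ∧ v ≤ Φ x}

/-- The generalized inverse, extended to `ℝ≥0∞`. -/
def nInvE (Φ : ℝ → ℝ) (v : ℝ≥0∞) : ℝ≥0∞ :=
  if v = ∞ then ∞ else ENNReal.ofReal (nInv Φ v.toReal)

/-- `Φ` is the N-function `Φ(x) = ∫₀ˣ φ`, where `φ : (0,∞) → (0,∞)` is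
nondecreasing and onto `(0,∞)`. -/
def IsNFunctionWith (φ Φ : ℝ → ℝ) : Prop :=
  MonotoneOn φ (Ioi 0) ∧ (∀ y > 0, 0 < φ y) ∧ (∀ s > 0, ∃ y > 0, φ y = s) ∧
    ∀ x : ℝ, Φ x = ∫ y in Ioc 0 x, φ y

/-- `Φ` is an N-function. -/
def IsNFunction (Φ : ℝ → ℝ) : Prop := ∃ φ, IsNFunctionWith φ Φ

/-- `Φ` and `Ψ` are complementary N-functions: `Φ(x) = ∫₀ˣ φ` and `Ψ(t) = ∫₀ᵗ φ⁻¹`,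
where `φ⁻¹(s) = inf {y > 0 : φ y ≥ s}`. -/
def IsNPair (Φ Ψ : ℝ → ℝ) : Prop :=
  ∃ φ, IsNFunctionWith φ Φ ∧
    ∀ t : ℝ, Ψ t = ∫ s in Ioc 0 t, sInf {y : ℝ | 0 < y ∧ s ≤ φ y}

/-- `Φ(2t) ≈ Φ(t)` for `t ≫ 1`. -/
def Delta2AtInfty (Φ : ℝ → ℝ) : Prop :=
  ∃ c > (0:ℝ), ∃ T > (0:ℝ), ∀ t ≥ T, Φ (2 * t) ≤ c * Φ t

/-- A weight: a nonnegative locally integrable function on `(0,∞)`. -/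
def IsWeight (u : ℝ → ℝ) : Prop :=
  (∀ x ∈ Ioi (0:ℝ), 0 ≤ u x) ∧ LocallyIntegrableOn u (Ioi 0)

/-- The weighted Orlicz gauge norm `ρ_{Φ,u}` on `(0,∞)`. -/
def gaugeW (Φ : ℝ → ℝ) (u : ℝ → ℝ) (f : ℝ → ℝ≥0∞) : ℝ≥0∞ :=
  sInf {l : ℝ≥0∞ | 0 < l ∧
    ∫⁻ x in Ioi (0:ℝ), appE Φ (f x / l) * ENNReal.ofReal (u x) ≤ 1}

/-- The unweighted Orlicz gauge norm `ρ_Φ` on `(0,∞)`. -/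
def gaugeP (Φ : ℝ → ℝ) (f : ℝ → ℝ≥0∞) : ℝ≥0∞ :=
  sInf {l : ℝ≥0∞ | 0 < l ∧ ∫⁻ x in Ioi (0:ℝ), appE Φ (f x / l) ≤ 1}

/-- The unweighted Orlicz gauge norm `ρ_Φ` on `ℝⁿ`. -/
def gaugeE {n : ℕ} (Φ : ℝ → ℝ) (f : EuclideanSpace ℝ (Fin n) → ℝ≥0∞) : ℝ≥0∞ :=
  sInf {l : ℝ≥0∞ | 0 < l ∧ ∫⁻ x, appE Φ (f x / l) ≤ 1}

/-- Convolution of nonnegative functions on `ℝⁿ`. -/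
def conv {n : ℕ} (f g : EuclideanSpace ℝ (Fin n) → ℝ≥0∞)
    (x : EuclideanSpace ℝ (Fin n)) : ℝ≥0∞ :=
  ∫⁻ y, f (x - y) * g y

/-- The integral operator with kernel `K` on `(0,∞)`. -/
def TK (K : ℝ → ℝ → ℝ≥0∞) (f : ℝ → ℝ≥0∞) (x : ℝ) : ℝ≥0∞ :=
  ∫⁻ y in Ioi (0:ℝ), K x y * f y

/-- The iterated rearrangement `L = (K^{*₂})^{*₁}` of a kernel on `(0,∞)²`:
first rearrange `y ↦ K x y` for fixed `x`, then rearrange the result in `x`. -/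
def iterRearr (K : ℝ → ℝ → ℝ≥0∞) (t s : ℝ) : ℝ≥0∞ :=
  rearrP (fun x => rearrP (K x) s) t

/-! For `0 < s ≤ t`, split `∫ₛ^∞ f g` at `t` and bound `g` by `g s` on `(s, t]`: the inner integral
is at most `g s · ∫₀ᵗ f + ∫ₜ^∞ f g`, and integrating this bound over `s ∈ (0, t]` gives the
inequality. -/

theorem setLIntegral_Ioi_mul_le {μ : Measure ℝ} {f g : ℝ → ℝ≥0∞} {s t : ℝ} (hf : Measurable f)
    (hg : AntitoneOn g (Ici s)) (hst : s ≤ t) :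
    ∫⁻ r in Ioi s, f r * g r ∂μ ≤
      g s * (∫⁻ r in Ioc s t, f r ∂μ) + ∫⁻ r in Ioi t, f r * g r ∂μ := by
  rw [← Ioc_union_Ioi_eq_Ioi hst, lintegral_union measurableSet_Ioi (Ioc_disjoint_Ioi le_rfl)]
  gcongr
  calc ∫⁻ r in Ioc s t, f r * g r ∂μ
      ≤ ∫⁻ r in Ioc s t, g s * f r ∂μ := by
        refine setLIntegral_mono (hf.const_mul _) fun r hr => ?_
        rw [mul_comm]
        gcongr
        exact hg self_mem_Ici (mem_Ici.2 hr.1.le) hr.1.le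
    _ = g s * ∫⁻ r in Ioc s t, f r ∂μ := lintegral_const_mul _ hf

theorem statement_0_general (f g : ℝ → ℝ≥0∞) (hf : Measurable f) (hg : Measurable g)
    (hga : AntitoneOn g (Ioi 0)) (t : ℝ) :
    ∫⁻ s in Ioc (0:ℝ) t, ∫⁻ r in Ioi s, f r * g r ≤
      (∫⁻ s in Ioc (0:ℝ) t, f s) * (∫⁻ s in Ioc (0:ℝ) t, g s) +
        ENNReal.ofReal t * ∫⁻ s in Ioi t, f s * g s := by
  set F := ∫⁻ s in Ioc (0:ℝ) t, f s
  set T := ∫⁻ s in Ioi t, f s * g s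
  have tail_le : ∀ s ∈ Ioc (0:ℝ) t, ∫⁻ r in Ioi s, f r * g r ≤ g s * F + T := fun s hs =>
    calc ∫⁻ r in Ioi s, f r * g r
        ≤ g s * (∫⁻ r in Ioc s t, f r) + T :=
          setLIntegral_Ioi_mul_le hf (hga.mono (Ici_subset_Ioi.2 hs.1)) hs.2
      _ ≤ g s * F + T := by
          gcongr
          exact lintegral_mono_set (Ioc_subset_Ioc_left hs.1.le)
  calc ∫⁻ s in Ioc (0:ℝ) t, ∫⁻ r in Ioi s, f r * g r
      ≤ ∫⁻ s in Ioc (0:ℝ) t, (g s * F + T) := setLIntegral_mono' measurableSet_Ioc tail_le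
    _ = F * (∫⁻ s in Ioc (0:ℝ) t, g s) + ENNReal.ofReal t * T := by
        rw [lintegral_add_right _ measurable_const, lintegral_mul_const _ hg, setLIntegral_const,
          Real.volume_Ioc, sub_zero, mul_comm, mul_comm T]

/-- for nonincreasing `f, g : (0,∞) → [0,∞]` and every `t > 0`,
`∫₀ᵗ (∫ₛ^∞ f g) ds ≤ (∫₀ᵗ f)(∫₀ᵗ g) + t ∫ₜ^∞ f g`. -/
theorem statement_0 (f g : ℝ → ℝ≥0∞) (hf : Measurable f) (hg : Measurable g)
    (hfa : AntitoneOn f (Ioi 0)) (hga : AntitoneOn g (Ioi 0)) (t : ℝ) (ht : 0 < t) :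
    ∫⁻ s in Ioc (0:ℝ) t, ∫⁻ r in Ioi s, f r * g r ≤
      (∫⁻ s in Ioc (0:ℝ) t, f s) * (∫⁻ s in Ioc (0:ℝ) t, g s) +
        ENNReal.ofReal t * ∫⁻ s in Ioi t, f s * g s :=
  statement_0_general f g hf hg hga t

end
end

section
/- Let K ∈ M₊(ℝ₊²) and let L = (K^{*₂})^{*₁} be its iterated rearrangement. Then for every f ∈ M₊(ℝ₊) and every t > 0, ∫₀ᵗ (T_K f)*(s) ds ≤ ∫₀ᵗ (T_L f*)(s) ds; equivalently, (T_K f)**(t) ≤ (T_L f*)**(t) for all t > 0, where h**(t) = t⁻¹∫₀ᵗ h*. -/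
/-!
By the Hardy–Littlewood inequality, `T_K f ≤ F` pointwise with `F x = ∫ (K x)*(r) f*(r) dr`, so it
suffices to bound `∫₀ᵗ F*`. As Lebesgue measure is non-atomic, `∫₀ᵗ F*` is the supremum of `∫_E F`
over the sets `|E| ≤ t`: take `E` with `{F > F*(t)} ⊆ E ⊆ {F > F*(t) - δ}` and `|E| = t`. For each
such `E`, Tonelli and `∫_E (K ·)*(r) ≤ ∫₀ᵗ L(·, r)` give `∫_E F ≤ ∫₀ᵗ T_L f*`.
-/

open MeasureTheory Set Function
open scoped ENNReal

noncomputable section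

section Rearrangement

variable {α : Type*} [MeasurableSpace α] {μ : Measure α}

theorem rearr_le_iff {g : α → ℝ≥0∞} {s : ℝ} {l : ℝ≥0∞} :
    rearr μ g s ≤ l ↔ μ {x | l < g x} ≤ ENNReal.ofReal s := by
  constructor
  · intro h
    rcases eq_or_ne l ∞ with rfl | hl
    · simp
    -- right continuity of the distribution function: `{l < g} = ⋃ₙ {l + n⁻¹ < g}`
    have hunion : {x | l < g x} = ⋃ n : ℕ, {x | l + (n : ℝ≥0∞)⁻¹ < g x} := by
      ext x
      simp only [mem_ofPred_eq, mem_iUnion]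
      refine ⟨fun hx => ?_, fun ⟨n, hn⟩ => le_self_add.trans_lt hn⟩
      obtain ⟨n, hn⟩ := ENNReal.exists_inv_nat_lt (tsub_pos_of_lt hx).ne'
      exact ⟨n, lt_tsub_iff_left.1 hn⟩
    have hmono : Monotone fun n : ℕ => {x | l + (n : ℝ≥0∞)⁻¹ < g x} :=
      fun n m hnm x (hx : l + (n : ℝ≥0∞)⁻¹ < g x) =>
        show l + (m : ℝ≥0∞)⁻¹ < g x from lt_of_le_of_lt (by gcongr) hx
    rw [hunion, hmono.measure_iUnion]
    refine iSup_le fun n => ?_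
    obtain ⟨l', ⟨-, hl'⟩, hl'n⟩ :=
      sInf_lt_iff.1 (h.trans_lt (ENNReal.lt_add_right hl
        (ENNReal.inv_ne_zero.2 (ENNReal.natCast_ne_top n))))
    exact (measure_mono fun x hx => hl'n.trans hx).trans hl'
  · intro h
    refine le_of_forall_gt_imp_ge_of_dense fun l' hl' => sInf_le ⟨pos_of_gt hl', ?_⟩
    exact (measure_mono fun x hx => hl'.trans hx).trans h

theorem lt_rearr_iff {g : α → ℝ≥0∞} {s : ℝ} {l : ℝ≥0∞} :
    l < rearr μ g s ↔ ENNReal.ofReal s < μ {x | l < g x} := by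
  simpa only [not_le] using rearr_le_iff.not

theorem rearr_antitone (g : α → ℝ≥0∞) : Antitone (rearr μ g) := fun _ _ hst =>
  sInf_le_sInf fun _ hl => ⟨hl.1, hl.2.trans (ENNReal.ofReal_le_ofReal hst)⟩

theorem rearr_mono : Monotone (rearr μ) := fun _ _ hgh _ =>
  sInf_le_sInf fun _ hl => ⟨hl.1, (measure_mono fun x hx => hx.trans_le (hgh x)).trans hl.2⟩

theorem measurable_rearr_uncurry {β : Type*} [MeasurableSpace β] {ν : Measure β} [SFinite ν]
    {W : α → β → ℝ≥0∞} (hW : Measurable (uncurry W)) :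
    Measurable fun p : α × ℝ => rearr ν (W p.1) p.2 := by
  refine measurable_of_Ioi fun c => ?_
  simp_rw [preimage, mem_Ioi, lt_rearr_iff]
  exact measurableSet_lt (ENNReal.measurable_ofReal.comp measurable_snd)
    ((measurable_measure_prodMk_left (measurableSet_lt measurable_const hW)).comp measurable_fst)

end Rearrangement

section LayerCake

variable {α : Type*} [MeasurableSpace α] {μ : Measure α}

theorem volume_restrict_Ioi_setOf_ofReal_lt (D : ℝ≥0∞) :
    volume.restrict (Ioi (0:ℝ)) {s | ENNReal.ofReal s < D} = D := by
  rw [Measure.restrict_apply' measurableSet_Ioi]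
  rcases eq_or_ne D ∞ with rfl | hD
  · simp
  · have : {s : ℝ | ENNReal.ofReal s < D} ∩ Ioi 0 = Ioo 0 D.toReal := by
      ext s
      simp only [mem_inter_iff, mem_ofPred_eq, mem_Ioi, mem_Ioo]
      exact ⟨fun ⟨h1, h2⟩ => ⟨h2, (ENNReal.ofReal_lt_iff_lt_toReal h2.le hD).1 h1⟩,
        fun ⟨h2, h1⟩ => ⟨(ENNReal.ofReal_lt_iff_lt_toReal h2.le hD).2 h1, h2⟩⟩
    rw [this, Real.volume_Ioo, sub_zero, ENNReal.ofReal_toReal hD]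

theorem lintegral_eq_lintegral_meas_ofReal_lt [SFinite μ] {g : α → ℝ≥0∞} (hg : Measurable g) :
    ∫⁻ x, g x ∂μ = ∫⁻ l in Ioi 0, μ {x | ENNReal.ofReal l < g x} := by
  have hS : MeasurableSet {p : α × ℝ | ENNReal.ofReal p.2 < g p.1} :=
    measurableSet_lt (ENNReal.measurable_ofReal.comp measurable_snd) (hg.comp measurable_fst)
  calc ∫⁻ x, g x ∂μ = ∫⁻ x, volume.restrict (Ioi 0) {l | ENNReal.ofReal l < g x} ∂μ := by
        simp only [volume_restrict_Ioi_setOf_ofReal_lt]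
    _ = (μ.prod (volume.restrict (Ioi 0))) {p | ENNReal.ofReal p.2 < g p.1} :=
        (Measure.prod_apply hS).symm
    _ = _ := Measure.prod_apply_symm hS

theorem lintegral_mul_eq_lintegral_lintegral_meas_inter [SFinite μ] {u v : α → ℝ≥0∞}
    (hu : Measurable u) (hv : Measurable v) :
    ∫⁻ x, u x * v x ∂μ = ∫⁻ l in Ioi 0, ∫⁻ m in Ioi 0,
      μ ({x | ENNReal.ofReal m < u x} ∩ {x | ENNReal.ofReal l < v x}) := by
  rw [show ∫⁻ x, u x * v x ∂μ = ∫⁻ x, v x ∂μ.withDensity u from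
      (lintegral_withDensity_eq_lintegral_mul μ hu hv).symm,
    lintegral_eq_lintegral_meas_ofReal_lt hv]
  refine lintegral_congr fun l => ?_
  rw [withDensity_apply _ (measurableSet_lt measurable_const hv),
    lintegral_eq_lintegral_meas_ofReal_lt hu]
  exact lintegral_congr fun m => Measure.restrict_apply (hu measurableSet_Ioi)

theorem setLIntegral_rearr_Ioc_eq {W : α → ℝ≥0∞} (t : ℝ) :
    ∫⁻ s in Ioc 0 t, rearr μ W s
      = ∫⁻ l in Ioi 0, min (μ {x | ENNReal.ofReal l < W x}) (ENNReal.ofReal t) := by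
  rw [← setLIntegral_congr Ioo_ae_eq_Ioc,
    lintegral_eq_lintegral_meas_ofReal_lt (rearr_antitone W).measurable]
  refine lintegral_congr fun l => ?_
  rw [← volume_restrict_Ioi_setOf_ofReal_lt (min _ _), Measure.restrict_apply' measurableSet_Ioo,
    Measure.restrict_apply' measurableSet_Ioi]
  congr 1
  ext s
  simp only [mem_inter_iff, mem_ofPred_eq, mem_Ioo, mem_Ioi, lt_rearr_iff, lt_min_iff,
    ENNReal.ofReal_lt_ofReal_iff']
  exact ⟨fun ⟨h1, h2, h3⟩ => ⟨⟨h1, h3, h2.trans h3⟩, h2⟩, fun ⟨⟨h1, h3, _⟩, h2⟩ => ⟨h1, h2, h3⟩⟩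

theorem lintegral_mul_le_setLIntegral_rearr_mul [SFinite μ] {g h : α → ℝ≥0∞} (hg : Measurable g)
    (hh : Measurable h) :
    ∫⁻ x, g x * h x ∂μ ≤ ∫⁻ s in Ioi 0, rearr μ g s * rearr μ h s := by
  rw [lintegral_mul_eq_lintegral_lintegral_meas_inter hg hh,
    lintegral_mul_eq_lintegral_lintegral_meas_inter (rearr_antitone g).measurable
      (rearr_antitone h).measurable]
  refine lintegral_mono fun l => lintegral_mono fun m => ?_
  have : {s | ENNReal.ofReal m < rearr μ g s} ∩ {s | ENNReal.ofReal l < rearr μ h s}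
      = {s | ENNReal.ofReal s < min (μ {x | ENNReal.ofReal m < g x})
          (μ {x | ENNReal.ofReal l < h x})} := by
    ext s
    simp only [mem_inter_iff, mem_ofPred_eq, lt_rearr_iff, lt_min_iff]
  rw [this, volume_restrict_Ioi_setOf_ofReal_lt]
  exact le_min (measure_mono inter_subset_left) (measure_mono inter_subset_right)

theorem setLIntegral_le_setLIntegral_rearr [SFinite μ] {W : α → ℝ≥0∞} (hW : Measurable W)
    {E : Set α} {t : ℝ} (hEt : μ E ≤ ENNReal.ofReal t) :
    ∫⁻ x in E, W x ∂μ ≤ ∫⁻ s in Ioc 0 t, rearr μ W s := by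
  rw [setLIntegral_rearr_Ioc_eq, lintegral_eq_lintegral_meas_ofReal_lt hW]
  refine lintegral_mono fun l => le_min (Measure.restrict_apply_le _ _) ?_
  exact (measure_mono (subset_univ _)).trans ((Measure.restrict_apply_univ E).trans_le hEt)

theorem lintegral_min_meas_lt_le_setLIntegral_add [SFinite μ] {F : α → ℝ≥0∞} (hF : Measurable F)
    {t a b : ℝ} {E : Set α} (hEa : E ⊆ {x | ENNReal.ofReal a < F x})
    (hbE : {x | ENNReal.ofReal b < F x} ⊆ E) (hEt : 0 < a → ENNReal.ofReal t ≤ μ E) :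
    ∫⁻ l in Ioi 0, min (μ {x | ENNReal.ofReal l < F x}) (ENNReal.ofReal t)
      ≤ ∫⁻ x in E, F x ∂μ + ENNReal.ofReal t * ENNReal.ofReal (b - a) := by
  have hpoint : ∀ l ∈ Ioi (0:ℝ), min (μ {x | ENNReal.ofReal l < F x}) (ENNReal.ofReal t)
      ≤ μ.restrict E {x | ENNReal.ofReal l < F x}
        + (Ioc a b).indicator (fun _ => ENNReal.ofReal t) l := by
    intro l hl
    rcases le_or_gt l a with hla | hal
    · have hE : E ⊆ {x | ENNReal.ofReal l < F x} := fun x hx =>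
        (ENNReal.ofReal_le_ofReal hla).trans_lt (hEa hx)
      rw [Measure.restrict_apply_superset hE]
      exact (min_le_right _ _).trans ((hEt (lt_of_lt_of_le hl hla)).trans le_self_add)
    rcases le_or_gt l b with hlb | hbl
    · rw [indicator_of_mem (show l ∈ Ioc a b from ⟨hal, hlb⟩)]
      exact (min_le_right _ _).trans le_add_self
    · have hE : {x | ENNReal.ofReal l < F x} ⊆ E := fun x hx =>
        hbE ((ENNReal.ofReal_le_ofReal hbl.le).trans_lt hx)
      rw [Measure.restrict_eq_self μ hE]
      exact (min_le_left _ _).trans le_self_add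
  calc _ ≤ ∫⁻ l in Ioi 0, (μ.restrict E {x | ENNReal.ofReal l < F x}
          + (Ioc a b).indicator (fun _ => ENNReal.ofReal t) l) :=
        setLIntegral_mono' measurableSet_Ioi hpoint
    _ ≤ ∫⁻ x in E, F x ∂μ + ENNReal.ofReal t * ENNReal.ofReal (b - a) := by
        rw [lintegral_add_right _ (measurable_const.indicator measurableSet_Ioc),
          lintegral_indicator_const measurableSet_Ioc, ← Real.volume_Ioc,
          lintegral_eq_lintegral_meas_ofReal_lt hF]
        gcongr
        exact Measure.restrict_le_self

end LayerCake

section Lebesgue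

variable {μ : Measure ℝ}

theorem exists_measurableSet_between_measure_eq (hμ : μ ≤ volume) {C B : Set ℝ}
    (hC : MeasurableSet C) (hB : MeasurableSet B) (hCB : C ⊆ B) {m : ℝ≥0∞} (hCm : μ C ≤ m)
    (hmB : m ≤ μ B) : ∃ E, MeasurableSet E ∧ C ⊆ E ∧ E ⊆ B ∧ μ E = m := by
  set S : ℝ → Set ℝ := fun c => C ∪ B ∩ Ioo (-c) c
  have hS_mono : Monotone S := fun c d hcd =>
    union_subset_union_right _ (inter_subset_inter_right _ (Ioo_subset_Ioo (by linarith) hcd))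
  -- `c ↦ μ (S c)` is `2`-Lipschitz, since `S c \ S d ⊆ (-c, -d] ∪ [d, c)`
  have hS_cont : Continuous fun c => μ (S c) := by
    refine continuous_of_le_add_edist 2 (by simp) fun c d => ?_
    have hsub : S c ⊆ S d ∪ Ioc (-c) (-d) ∪ Ico d c := by
      rintro x (hx | ⟨hxB, hx1, hx2⟩)
      · exact Or.inl (Or.inl (Or.inl hx))
      · by_cases h1 : x ≤ -d
        · exact Or.inl (Or.inr ⟨hx1, h1⟩)
        by_cases h2 : d ≤ x
        · exact Or.inr ⟨h2, hx2⟩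
        · exact Or.inl (Or.inl (Or.inr ⟨hxB, by linarith, by linarith⟩))
    have hlen : ENNReal.ofReal (c - d) ≤ edist c d := by
      rw [edist_dist, Real.dist_eq]
      exact ENNReal.ofReal_le_ofReal (le_abs_self _)
    calc μ (S c) ≤ μ (S d) + μ (Ioc (-c) (-d)) + μ (Ico d c) :=
          (measure_mono hsub).trans ((measure_union_le _ _).trans
            (add_le_add_left (measure_union_le _ _) _))
      _ ≤ μ (S d) + ENNReal.ofReal (c - d) + ENNReal.ofReal (c - d) := by
          gcongr
          · exact (Measure.le_iff'.1 hμ _).trans (by rw [Real.volume_Ioc, neg_sub_neg])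
          · exact (Measure.le_iff'.1 hμ _).trans (Real.volume_Ico).le
      _ ≤ μ (S d) + 2 * edist c d := by
          rw [add_assoc, two_mul]
          gcongr
  have hS_zero : S 0 = C := by simp [S]
  have hS_iUnion : ⋃ n : ℕ, S n = B := by
    refine subset_antisymm (iUnion_subset fun n => union_subset hCB inter_subset_left)
      fun x hx => ?_
    obtain ⟨n, hn⟩ := exists_nat_gt |x|
    exact mem_iUnion.2 ⟨n, Or.inr ⟨hx, abs_lt.1 hn⟩⟩
  by_cases h : ∃ n : ℕ, m ≤ μ (S n)
  · obtain ⟨n, hn⟩ := h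
    obtain ⟨c, -, hc⟩ := intermediate_value_Icc (Nat.cast_nonneg n) hS_cont.continuousOn
      ⟨hS_zero ▸ hCm, hn⟩
    exact ⟨S c, hC.union (hB.inter measurableSet_Ioo), subset_union_left,
      union_subset hCB inter_subset_left, hc⟩
  · simp only [not_exists, not_le] at h
    refine ⟨B, hB, hCB, subset_rfl, le_antisymm ?_ hmB⟩
    rw [← hS_iUnion,
      Monotone.measure_iUnion (s := fun n : ℕ => S n) (hS_mono.comp Nat.mono_cast)]
    exact iSup_le fun n => (h n).le

variable {F : ℝ → ℝ≥0∞} {t : ℝ} {M : ℝ≥0∞}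

theorem eq_top_of_rearr_eq_top (hμ : μ ≤ volume) (hF : Measurable F) (ht : 0 < t)
    (htop : rearr μ F t = ∞)
    (hM : ∀ E, MeasurableSet E → μ E ≤ ENNReal.ofReal t → ∫⁻ x in E, F x ∂μ ≤ M) : M = ∞ := by
  have hn : ∀ n : ℕ, (n : ℝ≥0∞) * ENNReal.ofReal t ≤ M := by
    intro n
    have hlt : ENNReal.ofReal t < μ {x | (n : ℝ≥0∞) < F x} :=
      lt_rearr_iff.1 (htop ▸ ENNReal.natCast_lt_top n)
    obtain ⟨E, hE, -, hEn, hEt⟩ := exists_measurableSet_between_measure_eq hμ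
      MeasurableSet.empty (hF measurableSet_Ioi) (empty_subset _) (by simp) hlt.le
    calc (n : ℝ≥0∞) * ENNReal.ofReal t = ∫⁻ _ in E, (n : ℝ≥0∞) ∂μ := by
          rw [setLIntegral_const, hEt]
      _ ≤ ∫⁻ x in E, F x ∂μ := setLIntegral_mono hF fun x hx => (hEn hx).le
      _ ≤ M := hM E hE hEt.le
  refine top_unique ?_
  rw [← ENNReal.top_mul (ENNReal.ofReal_pos.2 ht).ne', ← ENNReal.iSup_natCast, ENNReal.iSup_mul]
  exact iSup_le hn

theorem setLIntegral_rearr_le_of_forall_setLIntegral_le [SFinite μ] (hμ : μ ≤ volume)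
    (hF : Measurable F) (ht : 0 < t)
    (hM : ∀ E, MeasurableSet E → μ E ≤ ENNReal.ofReal t → ∫⁻ x in E, F x ∂μ ≤ M) :
    ∫⁻ s in Ioc 0 t, rearr μ F s ≤ M := by
  rcases eq_or_ne (rearr μ F t) ∞ with htop | htop
  · rw [eq_top_of_rearr_eq_top hμ hF ht htop hM]
    exact le_top
  rw [setLIntegral_rearr_Ioc_eq]
  refine ENNReal.le_of_forall_pos_le_add fun ε hε _ => ?_
  set b := (rearr μ F t).toReal
  set a := b - ε / t
  have hb : ENNReal.ofReal b = rearr μ F t := ENNReal.ofReal_toReal htop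
  have hab : a < b := sub_lt_self b (div_pos hε ht)
  have hA : μ {x | ENNReal.ofReal b < F x} ≤ ENNReal.ofReal t := rearr_le_iff.1 hb.ge
  obtain ⟨E, hE, hbE, hEa, hEt, hEt'⟩ : ∃ E, MeasurableSet E ∧
      {x | ENNReal.ofReal b < F x} ⊆ E ∧ E ⊆ {x | ENNReal.ofReal a < F x} ∧
      μ E ≤ ENNReal.ofReal t ∧ (0 < a → ENNReal.ofReal t ≤ μ E) := by
    have hsub : {x | ENNReal.ofReal b < F x} ⊆ {x | ENNReal.ofReal a < F x} := fun x hx =>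
      (ENNReal.ofReal_le_ofReal hab.le).trans_lt hx
    by_cases ha : 0 < a
    · have hlt : ENNReal.ofReal t < μ {x | ENNReal.ofReal a < F x} :=
        lt_rearr_iff.1 (hb ▸ (ENNReal.ofReal_lt_ofReal_iff'.2 ⟨hab, ha.trans hab⟩))
      obtain ⟨E, hE, hbE, hEa, hEt⟩ := exists_measurableSet_between_measure_eq hμ
        (hF measurableSet_Ioi) (hF measurableSet_Ioi) hsub hA hlt.le
      exact ⟨E, hE, hbE, hEa, hEt.le, fun _ => hEt.ge⟩
    · exact ⟨_, hF measurableSet_Ioi, subset_rfl, hsub, hA, fun h => absurd h ha⟩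
  calc _ ≤ ∫⁻ x in E, F x ∂μ + ENNReal.ofReal t * ENNReal.ofReal (b - a) :=
        lintegral_min_meas_lt_le_setLIntegral_add hF hEa hbE hEt'
    _ = ∫⁻ x in E, F x ∂μ + ε := by
        rw [← ENNReal.ofReal_mul ht.le, sub_sub_cancel, mul_div_cancel₀ _ ht.ne',
          ENNReal.ofReal_coe_nnreal]
    _ ≤ M + ε := add_le_add_left (hM E hE hEt) _

theorem setLIntegral_rearr_lintegral_mul_le [SFinite μ] (hμ : μ ≤ volume) {β : Type*}
    [MeasurableSpace β] {ν : Measure β} [SFinite ν] {G : ℝ → β → ℝ≥0∞}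
    (hG : Measurable (uncurry G)) {w : β → ℝ≥0∞} (hw : Measurable w) (ht : 0 < t) :
    ∫⁻ s in Ioc 0 t, rearr μ (fun x => ∫⁻ r, G x r * w r ∂ν) s
      ≤ ∫⁻ r, (∫⁻ s in Ioc 0 t, rearr μ (fun x => G x r) s) * w r ∂ν := by
  have hGw : Measurable fun p : ℝ × β => G p.1 p.2 * w p.2 := hG.mul (hw.comp measurable_snd)
  refine setLIntegral_rearr_le_of_forall_setLIntegral_le hμ hGw.lintegral_prod_right' ht
    fun E _ hEt => ?_
  calc ∫⁻ x in E, ∫⁻ r, G x r * w r ∂ν ∂μ = ∫⁻ r, (∫⁻ x in E, G x r ∂μ) * w r ∂ν := by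
        rw [lintegral_lintegral_swap hGw.aemeasurable]
        exact lintegral_congr fun r => lintegral_mul_const _ hG.of_uncurry_right
    _ ≤ _ := lintegral_mono fun r =>
        mul_le_mul_left (setLIntegral_le_setLIntegral_rearr hG.of_uncurry_right hEt) _

end Lebesgue

instance : SFinite mP := inferInstanceAs (SFinite (volume.restrict (Ioi 0)))

/-- `∫₀ᵗ (T_K f)* ≤ ∫₀ᵗ T_L f*`, where `L` is the iterated
rearrangement of `K`; equivalently `(T_K f)**(t) ≤ (T_L f*)**(t)`. -/
theorem statement_10 (K : ℝ → ℝ → ℝ≥0∞) (hK : Measurable (uncurry K))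
    (f : ℝ → ℝ≥0∞) (hf : Measurable f) (t : ℝ) (ht : 0 < t) :
    ∫⁻ s in Ioc (0:ℝ) t, rearrP (TK K f) s ≤
      ∫⁻ s in Ioc (0:ℝ) t, ∫⁻ r in Ioi (0:ℝ), iterRearr K s r * rearrP f r := by
  have hG : Measurable fun p : ℝ × ℝ => rearrP (K p.1) p.2 := measurable_rearr_uncurry hK
  have hL : Measurable (uncurry fun r s => iterRearr K s r) :=
    measurable_rearr_uncurry (W := fun r x => rearrP (K x) r) (hG.comp measurable_swap)
  have hf' : Measurable (rearrP f) := (rearr_antitone f).measurable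
  calc ∫⁻ s in Ioc 0 t, rearrP (TK K f) s
      ≤ ∫⁻ s in Ioc 0 t, rearrP (fun x => ∫⁻ r in Ioi 0, rearrP (K x) r * rearrP f r) s :=
        lintegral_mono fun s => rearr_mono (fun x =>
          lintegral_mul_le_setLIntegral_rearr_mul (μ := mP) hK.of_uncurry_left hf) s
    _ ≤ ∫⁻ r in Ioi 0, (∫⁻ s in Ioc 0 t, iterRearr K s r) * rearrP f r :=
        setLIntegral_rearr_lintegral_mul_le Measure.restrict_le_self hG hf' ht
    _ = ∫⁻ r in Ioi 0, ∫⁻ s in Ioc 0 t, iterRearr K s r * rearrP f r :=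
        lintegral_congr fun r => (lintegral_mul_const _ hL.of_uncurry_left).symm
    _ = ∫⁻ s in Ioc 0 t, ∫⁻ r in Ioi 0, iterRearr K s r * rearrP f r :=
        lintegral_lintegral_swap (hL.mul (hf'.comp measurable_fst)).aemeasurable

end
end

section
/- (Theorem 11, second growth condition) Let k : (0,∞) → [0,∞) be nonincreasing and define M₂(y,x) = ∫₀^{1/x} k(1/y + s) ds for x, y > 0. Then for all 0 < x < z < y one has M₂(y,x) ≤ M₂(y,z) + M₂(z,x). -/
open MeasureTheory Set Function
open scoped ENNReal

noncomputable section

/-! Split `(0, 1/x]` at `1/z`. The first piece is `M₂(y,z)`. On the tail `(1/z, 1/x]`, the shift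
by `1/y` only lowers the nonincreasing `k`; translating the window to `(0, 1/x - 1/z]` and enlarging
it to `(0, 1/x]` then bounds the tail by `M₂(z,x)`. -/

theorem setLIntegral_Ioc_eq_setLIntegral_Ioc_comp_const_add (g : ℝ → ℝ≥0∞) (a b : ℝ) :
    ∫⁻ s in Ioc a b, g s = ∫⁻ t in Ioc 0 (b - a), g (a + t) := by
  rw [← (measurePreserving_add_left volume a).setLIntegral_comp_preimage_emb
    (measurableEmbedding_addLeft a), preimage_const_add_Ioc, sub_self]

theorem setLIntegral_ofReal_comp_const_add_le {k : ℝ → ℝ} (hk : AntitoneOn k (Ioi 0))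
    {c : ℝ} (hc : 0 ≤ c) {s : Set ℝ} (hs : MeasurableSet s) (hs0 : s ⊆ Ioi 0) :
    ∫⁻ t in s, ENNReal.ofReal (k (c + t)) ≤ ∫⁻ t in s, ENNReal.ofReal (k t) := by
  refine setLIntegral_mono' hs fun t ht => ENNReal.ofReal_le_ofReal ?_
  have ht0 : 0 < t := hs0 ht
  exact hk ht0 (show 0 < c + t by linarith) (by linarith)

theorem setLIntegral_Ioc_ofReal_comp_const_add_le {k : ℝ → ℝ} (hk : AntitoneOn k (Ioi 0))
    {a b c : ℝ} (ha : 0 ≤ a) (hc : 0 ≤ c) :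
    ∫⁻ s in Ioc a b, ENNReal.ofReal (k (c + s)) ≤
      ∫⁻ t in Ioc 0 b, ENNReal.ofReal (k (a + t)) :=
  calc ∫⁻ s in Ioc a b, ENNReal.ofReal (k (c + s))
      ≤ ∫⁻ s in Ioc a b, ENNReal.ofReal (k s) :=
        setLIntegral_ofReal_comp_const_add_le hk hc measurableSet_Ioc
          fun _ hs => ha.trans_lt hs.1
    _ = ∫⁻ t in Ioc 0 (b - a), ENNReal.ofReal (k (a + t)) :=
        setLIntegral_Ioc_eq_setLIntegral_Ioc_comp_const_add _ a b
    _ ≤ ∫⁻ t in Ioc 0 b, ENNReal.ofReal (k (a + t)) :=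
        lintegral_mono_set (Ioc_subset_Ioc_right (by linarith))

theorem statement_15_general (k : ℝ → ℝ) (hk : AntitoneOn k (Ioi 0))
    (x y z : ℝ) (hx : 0 < x) (hxz : x < z) (hzy : z < y) :
    (∫⁻ s in Ioc (0:ℝ) (1 / x), ENNReal.ofReal (k (1 / y + s))) ≤
      (∫⁻ s in Ioc (0:ℝ) (1 / z), ENNReal.ofReal (k (1 / y + s))) +
        ∫⁻ s in Ioc (0:ℝ) (1 / x), ENNReal.ofReal (k (1 / z + s)) := by
  have hz : 0 < z := hx.trans hxz
  have hy : 0 < y := hz.trans hzy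
  conv_lhs => rw [← Ioc_union_Ioc_eq_Ioc (one_div_pos.2 hz).le
    (one_div_le_one_div_of_le hx hxz.le), lintegral_union measurableSet_Ioc
    (Ioc_disjoint_Ioc_of_le le_rfl)]
  exact add_le_add_right
    (setLIntegral_Ioc_ofReal_comp_const_add_le hk (one_div_pos.2 hz).le (one_div_pos.2 hy).le) _

/-- Theorem 11, second growth condition: for nonincreasing
`k : (0,∞) → [0,∞)` and `M₂(y,x) = ∫₀^{1/x} k(1/y+s) ds`, one has
`M₂(y,x) ≤ M₂(y,z) + M₂(z,x)` for `0 < x < z < y`. -/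
theorem statement_15 (k : ℝ → ℝ) (hk : AntitoneOn k (Ioi 0))
    (hk0 : ∀ t > (0:ℝ), 0 ≤ k t)
    (x y z : ℝ) (hx : 0 < x) (hxz : x < z) (hzy : z < y) :
    (∫⁻ s in Ioc (0:ℝ) (1 / x), ENNReal.ofReal (k (1 / y + s))) ≤
      (∫⁻ s in Ioc (0:ℝ) (1 / z), ENNReal.ofReal (k (1 / y + s))) +
        ∫⁻ s in Ioc (0:ℝ) (1 / x), ENNReal.ofReal (k (1 / z + s)) :=
  statement_15_general k hk x y z hx hxz hzy

end
end

section
/- Let k : (0,∞) → [0,∞) be nonincreasing and let K(x,y) = k(√(x²+y²)). Then the kernels M₁(x,y) = ∫₀ˣ k(√(y²+z²)) dz and M₂(y,x) = ∫₀^{1/x} k(√(y⁻²+z²)) dz satisfy the growth conditions: M₁(x,y) ≤ M₁(z,y) + M₁(x,z) for all 0 < y < z < x, and M₂(y,x) ≤ M₂(y,z) + M₂(z,x) for all 0 < x < z < y. -/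
open MeasureTheory Set Function
open scoped ENNReal

noncomputable section

/-!
Split `∫₀ˣ` at `z`. After the shift `w ↦ w - z`, the integrand on `(z, x]` at height `y` is
dominated by the integrand at height `z`, because `z² + (w - z)² ≤ w² ≤ y² + w²` for `0 ≤ z ≤ w`
and `k` is nonincreasing; the shifted range `(0, x - z]` lies in `(0, x]`. The condition on `M₂`
is the one on `M₁` at the points `x⁻¹, y⁻¹, z⁻¹`.
-/

/-- The kernel `M₁(x, y)`; note `M₂(y, x) = M₁(x⁻¹, y⁻¹)`. -/
def hardyKernel (k : ℝ → ℝ) (x y : ℝ) : ℝ≥0∞ :=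
  ∫⁻ w in Ioc (0:ℝ) x, ENNReal.ofReal (k (Real.sqrt (y ^ 2 + w ^ 2)))

lemma setLIntegral_Ioc_comp_sub_const (f : ℝ → ℝ≥0∞) (a b : ℝ) :
    ∫⁻ w in Ioc a b, f (w - a) = ∫⁻ u in Ioc 0 (b - a), f u := by
  rw [(measurePreserving_sub_right volume a).setLIntegral_comp_emb
    (measurableEmbedding_subRight a), image_sub_const_Ioc, sub_self]

lemma sqrt_sq_add_sq_sub_le_sqrt_sq_add_sq (y : ℝ) {z w : ℝ} (hz : 0 ≤ z) (hzw : z ≤ w) :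
    Real.sqrt (z ^ 2 + (w - z) ^ 2) ≤ Real.sqrt (y ^ 2 + w ^ 2) :=
  Real.sqrt_le_sqrt (by nlinarith [sq_nonneg y, mul_nonneg hz (sub_nonneg.2 hzw)])

variable {k : ℝ → ℝ}

lemma setLIntegral_Ioc_le_hardyKernel (hk : AntitoneOn k (Ioi 0)) (x y : ℝ) {z : ℝ}
    (hz : 0 ≤ z) :
    ∫⁻ w in Ioc z x, ENNReal.ofReal (k (Real.sqrt (y ^ 2 + w ^ 2))) ≤ hardyKernel k x z := by
  calc ∫⁻ w in Ioc z x, ENNReal.ofReal (k (Real.sqrt (y ^ 2 + w ^ 2)))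
      ≤ ∫⁻ w in Ioc z x, ENNReal.ofReal (k (Real.sqrt (z ^ 2 + (w - z) ^ 2))) := by
        refine setLIntegral_mono' measurableSet_Ioc fun w hw => ENNReal.ofReal_le_ofReal ?_
        have hpos : 0 < Real.sqrt (z ^ 2 + (w - z) ^ 2) :=
          Real.sqrt_pos.2 (by nlinarith [sq_pos_of_pos (sub_pos.2 hw.1)])
        have hle := sqrt_sq_add_sq_sub_le_sqrt_sq_add_sq y hz hw.1.le
        exact hk hpos (hpos.trans_le hle) hle
    _ = hardyKernel k (x - z) z :=
        setLIntegral_Ioc_comp_sub_const (fun u => ENNReal.ofReal (k (Real.sqrt (z ^ 2 + u ^ 2))))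
          z x
    _ ≤ hardyKernel k x z := lintegral_mono_set (Ioc_subset_Ioc_right (by linarith))

theorem hardyKernel_le_add (hk : AntitoneOn k (Ioi 0)) (y : ℝ) {x z : ℝ} (hz : 0 ≤ z)
    (hzx : z ≤ x) :
    hardyKernel k x y ≤ hardyKernel k z y + hardyKernel k x z := by
  have hsplit : hardyKernel k x y = hardyKernel k z y +
      ∫⁻ w in Ioc z x, ENNReal.ofReal (k (Real.sqrt (y ^ 2 + w ^ 2))) := by
    rw [hardyKernel, ← Ioc_union_Ioc_eq_Ioc hz hzx,
      lintegral_union measurableSet_Ioc (Ioc_disjoint_Ioc_of_le le_rfl), hardyKernel]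
  rw [hsplit]
  gcongr
  exact setLIntegral_Ioc_le_hardyKernel hk x y hz

theorem statement_17_general (k : ℝ → ℝ) (hk : AntitoneOn k (Ioi 0)) :
    (∀ x y z : ℝ, 0 < y → y < z → z < x →
      (∫⁻ w in Ioc (0:ℝ) x, ENNReal.ofReal (k (Real.sqrt (y ^ 2 + w ^ 2)))) ≤
        (∫⁻ w in Ioc (0:ℝ) z, ENNReal.ofReal (k (Real.sqrt (y ^ 2 + w ^ 2)))) +
          ∫⁻ w in Ioc (0:ℝ) x, ENNReal.ofReal (k (Real.sqrt (z ^ 2 + w ^ 2)))) ∧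
    (∀ x y z : ℝ, 0 < x → x < z → z < y →
      (∫⁻ w in Ioc (0:ℝ) x⁻¹, ENNReal.ofReal (k (Real.sqrt (y⁻¹ ^ 2 + w ^ 2)))) ≤
        (∫⁻ w in Ioc (0:ℝ) z⁻¹, ENNReal.ofReal (k (Real.sqrt (y⁻¹ ^ 2 + w ^ 2)))) +
          ∫⁻ w in Ioc (0:ℝ) x⁻¹, ENNReal.ofReal (k (Real.sqrt (z⁻¹ ^ 2 + w ^ 2)))) := by
  refine ⟨fun x y z hy hyz hzx => hardyKernel_le_add hk y (hy.trans hyz).le hzx.le,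
    fun x y z hx hxz _ => ?_⟩
  have hz : 0 < z := hx.trans hxz
  exact hardyKernel_le_add hk y⁻¹ (inv_pos.2 hz).le ((inv_le_inv₀ hz hx).2 hxz.le)

/-- growth conditions for the Hardy-type kernels associated with
`K(x,y) = k(√(x²+y²))`, `k` nonincreasing. -/
theorem statement_17 (k : ℝ → ℝ) (hk : AntitoneOn k (Ioi 0))
    (hk0 : ∀ t > (0:ℝ), 0 ≤ k t) :
    (∀ x y z : ℝ, 0 < y → y < z → z < x →
      (∫⁻ w in Ioc (0:ℝ) x, ENNReal.ofReal (k (Real.sqrt (y ^ 2 + w ^ 2)))) ≤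
        (∫⁻ w in Ioc (0:ℝ) z, ENNReal.ofReal (k (Real.sqrt (y ^ 2 + w ^ 2)))) +
          ∫⁻ w in Ioc (0:ℝ) x, ENNReal.ofReal (k (Real.sqrt (z ^ 2 + w ^ 2)))) ∧
    (∀ x y z : ℝ, 0 < x → x < z → z < y →
      (∫⁻ w in Ioc (0:ℝ) x⁻¹, ENNReal.ofReal (k (Real.sqrt (y⁻¹ ^ 2 + w ^ 2)))) ≤
        (∫⁻ w in Ioc (0:ℝ) z⁻¹, ENNReal.ofReal (k (Real.sqrt (y⁻¹ ^ 2 + w ^ 2)))) +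
          ∫⁻ w in Ioc (0:ℝ) x⁻¹, ENNReal.ofReal (k (Real.sqrt (z⁻¹ ^ 2 + w ^ 2)))) :=
  statement_17_general k hk

end
end
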